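/- arXiv:1210.7257 — 2 statements merged into one kernel-verified Lean document; each statement's English description precedes it below -/
import Mathlib

section
/- Let μ be a probability measure on [0,1] with μ({1}) = 0 such that 𝕋μ ∈ L_q([0,1]). Then for every Z ∈ L_p([0,1]) one has ∫₀¹ AV@R_α(Z) dμ(α) = ∫₀¹ (𝕋μ)(τ) F_Z^{-1}(τ) dτ. -/
open MeasureTheory Set Filter Topology
open scoped ENNReal

noncomputable section

/-- The standard probability space: the uniform (Lebesgue) probability measure on `[0,1] ⊆ ℝ`. -/
def stdP : Measure ℝ := volume.restrict (Icc (0:ℝ) 1)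

/-- Cumulative distribution function of a random variable `Z` on the standard space. -/
def cdf (Z : ℝ → ℝ) (z : ℝ) : ℝ := (stdP {ω | Z ω ≤ z}).toReal

/-- Right-side quantile function `F_Z^{-1}(τ) = sup{t : F_Z(t) ≤ τ}`. -/
def quant (Z : ℝ → ℝ) (τ : ℝ) : ℝ := sSup {t : ℝ | cdf Z t ≤ τ}

/-- Average Value-at-Risk at level `α`. -/
def avar (Z : ℝ → ℝ) (α : ℝ) : ℝ := (1 - α)⁻¹ * ∫ τ in Ioc α 1, quant Z τ

/-- The scalar product `⟨ζ, Z⟩ = ∫₀¹ ζ(τ) Z(τ) dτ`. -/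
def pairing (ζ Z : ℝ → ℝ) : ℝ := ∫ ω, ζ ω * Z ω ∂stdP

/-- Expectation w.r.t. the standard probability space. -/
def expct (Z : ℝ → ℝ) : ℝ := ∫ ω, Z ω ∂stdP

/-- `μ ∈ 𝔓`: a probability measure supported on `[0,1]` with zero mass at `{1}`. -/
def IsP01 (μ : Measure ℝ) : Prop :=
  IsProbabilityMeasure μ ∧ μ (Icc (0:ℝ) 1)ᶜ = 0 ∧ μ {(1:ℝ)} = 0

/-- cdf of a measure on ℝ. -/
def mcdf (μ : Measure ℝ) (x : ℝ) : ℝ := (μ (Iic x)).toReal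

/-- First order stochastic dominance `μ ≼ ν`, i.e. `μ(x) ≥ ν(x)` for all `x`. -/
def FSD (μ ν : Measure ℝ) : Prop := ∀ x : ℝ, mcdf ν x ≤ mcdf μ x

/-- The map `𝕋`: `(𝕋μ)(τ) = ∫_{[0,τ]} (1-α)⁻¹ dμ(α)`. -/
def Tmap (μ : Measure ℝ) (τ : ℝ) : ℝ := ∫ α in Icc (0:ℝ) τ, (1 - α)⁻¹ ∂μ

/-- Spectral function: nonnegative, nondecreasing, right-continuous on `[0,1)`,
integrating to one. -/
def IsSpectral (σ : ℝ → ℝ) : Prop :=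
  (∀ t ∈ Ico (0:ℝ) 1, 0 ≤ σ t) ∧ MonotoneOn σ (Ico (0:ℝ) 1) ∧
  (∀ t ∈ Ico (0:ℝ) 1, ContinuousWithinAt σ (Ici t) t) ∧
  (∫ t in Ioo (0:ℝ) 1, σ t) = 1

/-- An element of `L_q` is (a.e.) spectral if it has a spectral representative. -/
def IsSpectralAE (σ : ℝ → ℝ) : Prop := ∃ σ₀ : ℝ → ℝ, IsSpectral σ₀ ∧ σ =ᵐ[stdP] σ₀

/-- `∫₀¹ AV@R_α(Z) dμ(α)`. -/
def kusuokaIntegral (μ : Measure ℝ) (Z : ℝ → ℝ) : ℝ := ∫ α, avar Z α ∂μ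

/-- `∫₀¹ σ(τ) F_Z^{-1}(τ) dτ`. -/
def spectralIntegral (σ Z : ℝ → ℝ) : ℝ := ∫ t in Ioo (0:ℝ) 1, σ t * quant Z t

/-- Coherent risk measure on `L_p` of the standard space: monotone, convex,
translation equivariant and positively homogeneous. -/
def IsCoherent (p : ℝ≥0∞) (ρ : (ℝ → ℝ) → ℝ) : Prop :=
  (∀ Z Z' : ℝ → ℝ, MemLp Z p stdP → MemLp Z' p stdP →
      (∀ᵐ ω ∂stdP, Z' ω ≤ Z ω) → ρ Z' ≤ ρ Z) ∧
  (∀ Z Z' : ℝ → ℝ, ∀ t : ℝ, MemLp Z p stdP → MemLp Z' p stdP → t ∈ Icc (0:ℝ) 1 →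
      ρ (fun ω => t * Z ω + (1 - t) * Z' ω) ≤ t * ρ Z + (1 - t) * ρ Z') ∧
  (∀ Z : ℝ → ℝ, ∀ a : ℝ, MemLp Z p stdP → ρ (fun ω => Z ω + a) = ρ Z + a) ∧
  (∀ Z : ℝ → ℝ, ∀ t : ℝ, MemLp Z p stdP → 0 ≤ t → ρ (fun ω => t * Z ω) = t * ρ Z)

/-- Law invariance: distributionally equivalent random variables get the same value. -/
def IsLawInvariant (p : ℝ≥0∞) (ρ : (ℝ → ℝ) → ℝ) : Prop :=
  ∀ Z Z' : ℝ → ℝ, MemLp Z p stdP → MemLp Z' p stdP → cdf Z = cdf Z' → ρ Z = ρ Z'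

/-- `𝔐 ⊆ 𝔓` is a Kusuoka set for `ρ` : `ρ(Z) = sup_{μ∈𝔐} ∫₀¹ AV@R_α(Z) dμ(α)`. -/
def IsKusuokaSet (p : ℝ≥0∞) (ρ : (ℝ → ℝ) → ℝ) (M : Set (Measure ℝ)) : Prop :=
  (∀ μ ∈ M, IsP01 μ) ∧
  ∀ Z : ℝ → ℝ, MemLp Z p stdP →
    IsLUB {x : ℝ | ∃ μ ∈ M, x = kusuokaIntegral μ Z} (ρ Z)

/-- `Υ ⊆ 𝔖` is a generating set for `ρ` : `ρ(Z) = sup_{σ∈Υ} ∫₀¹ σ(τ) F_Z^{-1}(τ) dτ`. -/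
def IsGeneratingSet (p : ℝ≥0∞) (ρ : (ℝ → ℝ) → ℝ) (Υ : Set (ℝ → ℝ)) : Prop :=
  (∀ σ ∈ Υ, IsSpectralAE σ) ∧
  ∀ Z : ℝ → ℝ, MemLp Z p stdP →
    IsLUB {x : ℝ | ∃ σ ∈ Υ, x = spectralIntegral σ Z} (ρ Z)

/-- The dual set `𝔄 = {ζ ∈ Z* : ⟨ζ,Z⟩ ≤ ρ(Z) for all Z ∈ Z}`. -/
def dualSet (p q : ℝ≥0∞) (ρ : (ℝ → ℝ) → ℝ) : Set (ℝ → ℝ) :=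
  {ζ : ℝ → ℝ | MemLp ζ q stdP ∧ ∀ Z : ℝ → ℝ, MemLp Z p stdP → pairing ζ Z ≤ ρ Z}

/-- `Z` exposes `A` at `ζbar`: `ζ ↦ ⟨ζ,Z⟩` attains its maximum over `A`
at the unique (up to a.e. equality) point `ζbar`. -/
def Exposes (A : Set (ℝ → ℝ)) (Z ζbar : ℝ → ℝ) : Prop :=
  ζbar ∈ A ∧ (∀ ζ ∈ A, pairing ζ Z ≤ pairing ζbar Z) ∧
  ∀ ζ ∈ A, pairing ζ Z = pairing ζbar Z → ζ =ᵐ[stdP] ζbar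

/-- The set `Exp(A)` of weak* exposed points of `A`. -/
def expPoints (p : ℝ≥0∞) (A : Set (ℝ → ℝ)) : Set (ℝ → ℝ) :=
  {ζ : ℝ → ℝ | ∃ Z : ℝ → ℝ, MemLp Z p stdP ∧ Exposes A Z ζ}

/-- The weak* topology on (densities of) elements of `Z* = L_q`, induced by the
pairings against elements of `Z = L_p`. -/
def wstarTop (p : ℝ≥0∞) : TopologicalSpace (ℝ → ℝ) :=
  TopologicalSpace.induced
    (fun ζ => fun Z : {Z : ℝ → ℝ // MemLp Z p stdP} => pairing ζ Z.1)
    Pi.topologicalSpace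

/-- Weak* closure. -/
def wstarClosure (p : ℝ≥0∞) (S : Set (ℝ → ℝ)) : Set (ℝ → ℝ) :=
  @closure _ (wstarTop p) S

/-- Weak* closedness. -/
def IsWStarClosed (p : ℝ≥0∞) (S : Set (ℝ → ℝ)) : Prop :=
  @IsClosed _ (wstarTop p) S

/-- The weak topology of measures, induced by integration of bounded continuous functions. -/
def weakTopM : TopologicalSpace (Measure ℝ) :=
  TopologicalSpace.induced
    (fun μ => fun f : BoundedContinuousFunction ℝ ℝ => ∫ x, f x ∂μ)
    Pi.topologicalSpace

/-- Closure in the weak topology of measures. -/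
def weakClosureM (M : Set (Measure ℝ)) : Set (Measure ℝ) := @closure _ weakTopM M

/-- Closure within `𝔓` (in the weak topology of measures). -/
def closureP (M : Set (Measure ℝ)) : Set (Measure ℝ) := weakClosureM M ∩ {μ | IsP01 μ}

/-- Closedness within `𝔓`. -/
def IsClosedInP (M : Set (Measure ℝ)) : Prop := closureP M ⊆ M

/-- The minimal Kusuoka set: a closed Kusuoka set contained in every closed Kusuoka set. -/
def IsMinimalKusuoka (p : ℝ≥0∞) (ρ : (ℝ → ℝ) → ℝ) (M : Set (Measure ℝ)) : Prop :=
  IsKusuokaSet p ρ M ∧ IsClosedInP M ∧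
  ∀ M' : Set (Measure ℝ), IsKusuokaSet p ρ M' → IsClosedInP M' → M ⊆ M'

/-- Measure-preserving transformations of `[0,1]`: bijections of `[0,1]` with
`P(T(A)) = P(A)` for all measurable `A`. -/
def IsMPT (T : ℝ → ℝ) : Prop :=
  Measurable T ∧ BijOn T (Icc (0:ℝ) 1) (Icc (0:ℝ) 1) ∧
  ∀ A : Set ℝ, MeasurableSet A → stdP (T '' A) = stdP A

/-!
Both sides are iterated integrals, in the two possible orders, of the kernel
`𝟙{α ≤ τ} (1 - α)⁻¹ F_Z⁻¹(τ)` against `μ ⊗ dτ`, so they agree by Fubini once the kernel is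
absolutely integrable. Integrating `|kernel|` in `α` gives `(𝕋μ)(τ) |F_Z⁻¹(τ)|`, which is
integrable by Hölder: `F_Z⁻¹` pushes the uniform law on `(0,1)` forward to the law of `Z`, so it
lies in `L_p` together with `Z`.
-/

namespace ProbabilityTheory

def cdfQuantile (ν : Measure ℝ) (τ : ℝ) : ℝ := sSup {t : ℝ | cdf ν t ≤ τ}

variable {ν : Measure ℝ} {τ z : ℝ}

lemma nonempty_setOf_cdf_le (hτ : 0 < τ) : {t : ℝ | cdf ν t ≤ τ}.Nonempty :=
  (((tendsto_cdf_atBot ν).eventually_lt_const hτ).exists).imp fun _ ht => ht.le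

lemma bddAbove_setOf_cdf_le (hτ : τ < 1) : BddAbove {t : ℝ | cdf ν t ≤ τ} := by
  obtain ⟨s, hs⟩ := ((tendsto_cdf_atTop ν).eventually_const_lt hτ).exists
  refine ⟨s, fun t ht => le_of_not_gt fun hst => ?_⟩
  exact (hs.trans_le (monotone_cdf ν hst.le)).not_ge ht

lemma cdfQuantile_le_of_lt_cdf (hτ : 0 < τ) (h : τ < cdf ν z) : cdfQuantile ν τ ≤ z :=
  csSup_le (nonempty_setOf_cdf_le hτ) fun _ ht =>
    le_of_not_gt fun hzt => (h.trans_le (monotone_cdf ν hzt.le)).not_ge ht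

lemma le_cdf_of_cdfQuantile_le (hτ : τ < 1) (h : cdfQuantile ν τ ≤ z) : τ ≤ cdf ν z := by
  by_contra! hz
  have hright : ∀ᶠ t in 𝓝[>] z, cdf ν t < τ :=
    (((cdf ν).right_continuous z).mono Ioi_subset_Ici_self).eventually_lt_const hz
  obtain ⟨t, htτ, hzt⟩ := (hright.and self_mem_nhdsWithin).exists
  exact (hzt.trans_le ((le_csSup (bddAbove_setOf_cdf_le hτ) htτ.le).trans h)).false

lemma monotoneOn_cdfQuantile : MonotoneOn (cdfQuantile ν) (Ioo 0 1) := fun _ ha _ hb hab =>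
  csSup_le_csSup (bddAbove_setOf_cdf_le hb.2) (nonempty_setOf_cdf_le ha.1)
    fun _ ht => le_trans ht hab

lemma aemeasurable_cdfQuantile : AEMeasurable (cdfQuantile ν) (volume.restrict (Ioo 0 1)) :=
  aemeasurable_restrict_of_monotoneOn measurableSet_Ioo monotoneOn_cdfQuantile

lemma volume_cdfQuantile_preimage_Iic (z : ℝ) :
    volume (cdfQuantile ν ⁻¹' Iic z ∩ Ioo 0 1) = ENNReal.ofReal (cdf ν z) := by
  refine le_antisymm ?_ ?_
  · calc volume (cdfQuantile ν ⁻¹' Iic z ∩ Ioo 0 1)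
        ≤ volume (Ioc 0 (cdf ν z)) :=
          measure_mono fun τ ⟨hτz, hτ⟩ => ⟨hτ.1, le_cdf_of_cdfQuantile_le hτ.2 hτz⟩
      _ = ENNReal.ofReal (cdf ν z) := by rw [Real.volume_Ioc, sub_zero]
  · calc ENNReal.ofReal (cdf ν z) = volume (Ioo 0 (cdf ν z)) := by rw [Real.volume_Ioo, sub_zero]
      _ ≤ volume (cdfQuantile ν ⁻¹' Iic z ∩ Ioo 0 1) :=
          measure_mono fun τ hτ => ⟨cdfQuantile_le_of_lt_cdf hτ.1 hτ.2,
            hτ.1, hτ.2.trans_le (cdf_le_one ν z)⟩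

lemma map_cdfQuantile [IsProbabilityMeasure ν] :
    (volume.restrict (Ioo 0 1)).map (cdfQuantile ν) = ν := by
  have : IsProbabilityMeasure (volume.restrict (Ioo (0:ℝ) 1)) := ⟨by simp [Real.volume_Ioo]⟩
  have := Measure.isProbabilityMeasure_map (μ := volume.restrict (Ioo (0:ℝ) 1))
    (aemeasurable_cdfQuantile (ν := ν))
  refine Measure.ext_of_Iic _ _ fun z => ?_
  rw [Measure.map_apply_of_aemeasurable aemeasurable_cdfQuantile measurableSet_Iic,
    Measure.restrict_apply' measurableSet_Ioo, volume_cdfQuantile_preimage_Iic, ofReal_cdf]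

end ProbabilityTheory

open ProbabilityTheory

instance isProbabilityMeasure_stdP : IsProbabilityMeasure stdP := ⟨by simp [stdP, Real.volume_Icc]⟩

lemma stdP_eq_restrict_Ioo : stdP = volume.restrict (Ioo 0 1) :=
  (Measure.restrict_congr_set Ioo_ae_eq_Icc).symm

section Quantile

variable {Z : ℝ → ℝ}

lemma cdf_eq_cdf_map (hZ : AEMeasurable Z stdP) : cdf Z = ProbabilityTheory.cdf (stdP.map Z) := by
  have := Measure.isProbabilityMeasure_map hZ
  ext z
  rw [ProbabilityTheory.cdf_eq_real, measureReal_def,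
    Measure.map_apply_of_aemeasurable hZ measurableSet_Iic]
  rfl

lemma quant_eq_cdfQuantile (hZ : AEMeasurable Z stdP) : quant Z = cdfQuantile (stdP.map Z) := by
  ext τ
  rw [quant, cdf_eq_cdf_map hZ, cdfQuantile]

lemma map_quant (hZ : AEMeasurable Z stdP) : stdP.map (quant Z) = stdP.map Z := by
  have := Measure.isProbabilityMeasure_map hZ
  rw [quant_eq_cdfQuantile hZ]
  nth_rw 2 [stdP_eq_restrict_Ioo]
  exact map_cdfQuantile

lemma memLp_quant {r : ℝ≥0∞} (hZ : MemLp Z r stdP) : MemLp (quant Z) r stdP := by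
  have hQ : AEMeasurable (quant Z) stdP := by
    rw [quant_eq_cdfQuantile hZ.aestronglyMeasurable.aemeasurable, stdP_eq_restrict_Ioo]
    exact aemeasurable_cdfQuantile
  have hid : MemLp id r (stdP.map Z) :=
    (memLp_map_measure_iff aestronglyMeasurable_id hZ.aestronglyMeasurable.aemeasurable).2 hZ
  rw [← map_quant hZ.aestronglyMeasurable.aemeasurable] at hid
  exact (memLp_map_measure_iff aestronglyMeasurable_id hQ).1 hid

end Quantile

section TailKernel

variable {μ : Measure ℝ} {f : ℝ → ℝ} {α τ : ℝ}

def tailKernel (f : ℝ → ℝ) : ℝ × ℝ → ℝ :=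
  {x : ℝ × ℝ | x.1 ≤ x.2}.indicator fun x => (1 - x.1)⁻¹ * f x.2

lemma tailKernel_eq_indicator_Ici :
    (fun τ => tailKernel f (α, τ)) = (Ici α).indicator fun τ => (1 - α)⁻¹ * f τ := rfl

lemma tailKernel_eq_indicator_Iic :
    (fun α => tailKernel f (α, τ)) = (Iic τ).indicator fun α => (1 - α)⁻¹ * f τ := rfl

lemma norm_tailKernel (hτ : τ < 1) : ‖tailKernel f (α, τ)‖ = tailKernel (‖f ·‖) (α, τ) := by
  by_cases hατ : α ≤ τ
  · have : 0 < 1 - α := by linarith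
    simp [tailKernel, hατ, abs_of_pos this]
  · simp [tailKernel, hατ]

lemma integral_tailKernel_left (hα : 0 ≤ α) :
    ∫ τ, tailKernel f (α, τ) ∂stdP = (1 - α)⁻¹ * ∫ τ in Ioc α 1, f τ := by
  rw [tailKernel_eq_indicator_Ici, integral_indicator measurableSet_Ici, stdP,
    Measure.restrict_restrict measurableSet_Ici, ← Ici_inter_Iic, ← inter_assoc, Ici_inter_Ici,
    sup_eq_left.2 hα, Ici_inter_Iic,
    Measure.restrict_congr_set Ioc_ae_eq_Icc.symm, integral_const_mul]

lemma integral_tailKernel_right (hμ : ∀ᵐ α ∂μ, 0 ≤ α) (τ : ℝ) :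
    ∫ α, tailKernel f (α, τ) ∂μ = Tmap μ τ * f τ := by
  have : (Iic τ : Set ℝ) =ᵐ[μ] Icc 0 τ := by
    filter_upwards [hμ] with α hα using propext ⟨fun h => ⟨hα, h⟩, And.right⟩
  rw [tailKernel_eq_indicator_Iic, integral_indicator measurableSet_Iic,
    Measure.restrict_congr_set this, integral_mul_const, Tmap]

lemma integrable_tailKernel_right [IsFiniteMeasure μ] (hτ : τ < 1) :
    Integrable (fun α => tailKernel f (α, τ)) μ := by
  rw [tailKernel_eq_indicator_Iic, integrable_indicator_iff measurableSet_Iic]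
  refine Integrable.mono' (integrable_const ((1 - τ)⁻¹ * ‖f τ‖))
    (((measurable_const.sub measurable_id).inv.mul_const _).aestronglyMeasurable) ?_
  filter_upwards [ae_restrict_mem measurableSet_Iic] with α (hα : α ≤ τ)
  rw [norm_mul, Real.norm_of_nonneg (inv_nonneg.2 (by linarith))]
  gcongr

lemma aestronglyMeasurable_tailKernel {ν : Measure ℝ} [SFinite ν]
    (hf : AEStronglyMeasurable f ν) : AEStronglyMeasurable (tailKernel f) (μ.prod ν) :=
  (((measurable_const.sub measurable_fst).inv.aestronglyMeasurable).mul
    (hf.comp_quasiMeasurePreserving Measure.quasiMeasurePreserving_snd)).indicator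
    (measurableSet_le measurable_fst measurable_snd)

lemma integrable_tailKernel [IsFiniteMeasure μ] (hμ : ∀ᵐ α ∂μ, 0 ≤ α)
    (hf : AEStronglyMeasurable f stdP) (hint : Integrable (fun τ => Tmap μ τ * ‖f τ‖) stdP) :
    Integrable (tailKernel f) (μ.prod stdP) := by
  have hτ1 : ∀ᵐ τ ∂stdP, τ < 1 := by
    rw [stdP_eq_restrict_Ioo]
    filter_upwards [ae_restrict_mem measurableSet_Ioo] with τ hτ using hτ.2
  refine (integrable_prod_iff' (aestronglyMeasurable_tailKernel hf)).2
    ⟨hτ1.mono fun τ hτ => integrable_tailKernel_right hτ, hint.congr ?_⟩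
  filter_upwards [hτ1] with τ hτ
  simp_rw [norm_tailKernel hτ, integral_tailKernel_right hμ]

theorem integral_tailAverage_eq_setIntegral_Tmap_mul [IsFiniteMeasure μ] (hμ : ∀ᵐ α ∂μ, 0 ≤ α)
    (hf : AEStronglyMeasurable f stdP) (hint : Integrable (fun τ => Tmap μ τ * ‖f τ‖) stdP) :
    ∫ α, (1 - α)⁻¹ * (∫ τ in Ioc α 1, f τ) ∂μ = ∫ τ in Ioo 0 1, Tmap μ τ * f τ :=
  calc ∫ α, (1 - α)⁻¹ * (∫ τ in Ioc α 1, f τ) ∂μ = ∫ α, ∫ τ, tailKernel f (α, τ) ∂stdP ∂μ :=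
        integral_congr_ae (hμ.mono fun _ hα => (integral_tailKernel_left hα).symm)
    _ = ∫ τ, ∫ α, tailKernel f (α, τ) ∂μ ∂stdP :=
        integral_integral_swap (integrable_tailKernel hμ hf hint)
    _ = ∫ τ in Ioo 0 1, Tmap μ τ * f τ := by
        simp_rw [integral_tailKernel_right hμ, stdP_eq_restrict_Ioo]

end TailKernel

theorem kusuoka_integral_eq_spectral_integral_general
    (p q : ℝ≥0∞) (hpq : 1 / p + 1 / q = 1)
    (μ : Measure ℝ) (hμ : IsP01 μ) (hTμ : MemLp (Tmap μ) q stdP)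
    (Z : ℝ → ℝ) (hZ : MemLp Z p stdP) :
    kusuokaIntegral μ Z = spectralIntegral (Tmap μ) Z := by
  obtain ⟨hprob, hsupp, -⟩ := hμ
  have hμ_nonneg : ∀ᵐ α ∂μ, 0 ≤ α :=
    ae_iff.2 (measure_mono_null (fun _ hα hα' => hα (mem_Icc.1 hα').1) hsupp)
  have : ENNReal.HolderConjugate q p :=
    ENNReal.holderConjugate_iff.2 (by simpa only [one_div, add_comm] using hpq)
  have hQ : MemLp (quant Z) p stdP := memLp_quant hZ
  exact integral_tailAverage_eq_setIntegral_Tmap_mul hμ_nonneg hQ.1 (hTμ.integrable_mul hQ.norm)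

/-- For `μ ∈ 𝔓` with `𝕋μ ∈ L_q([0,1])` and every `Z ∈ L_p([0,1])`,
`∫₀¹ AV@R_α(Z) dμ(α) = ∫₀¹ (𝕋μ)(τ) F_Z^{-1}(τ) dτ`. -/
theorem kusuoka_integral_eq_spectral_integral
    (p q : ℝ≥0∞) (hp : 1 ≤ p) (hp' : p ≠ ∞) (hpq : 1 / p + 1 / q = 1)
    (μ : Measure ℝ) (hμ : IsP01 μ) (hTμ : MemLp (Tmap μ) q stdP)
    (Z : ℝ → ℝ) (hZ : MemLp Z p stdP) :
    kusuokaIntegral μ Z = spectralIntegral (Tmap μ) Z :=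
  kusuoka_integral_eq_spectral_integral_general p q hpq μ hμ hTμ Z hZ

end
end

section
/- Let ρ : L_p([0,1]) → ℝ be a law invariant coherent risk measure with dual set 𝔄. Then the set Exp(𝔄) of weak* exposed points of 𝔄 and its weak* closure are invariant under the group 𝔉 of measure-preserving transformations of [0,1]: if ζ ∈ Exp(𝔄) and T ∈ 𝔉 then ζ∘T ∈ Exp(𝔄), and likewise for the weak* closure of Exp(𝔄). -/
open MeasureTheory Set Filter Topology
open scoped ENNReal

noncomputable section

/-!
Extending `T` by the identity off `[0,1]` gives a measure-preserving measurable automorphism `e`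
of the standard space that agrees with `T` almost everywhere. By law invariance, `ζ ↦ ζ ∘ e` maps
the dual set onto itself, and `⟨ζ ∘ e, Z ∘ e⟩ = ⟨ζ, Z⟩`; hence `Z` exposes `ζ` if and only if
`Z ∘ e` exposes `ζ ∘ e`. The map `ζ ↦ ζ ∘ e` is weak* continuous, its adjoint being
`Z ↦ Z ∘ e⁻¹`, so it also preserves the weak* closure of `Exp(𝔄)`. Finally, all of these
notions only see `ζ` up to a.e. equality, so they pass from `ζ ∘ e` to `ζ ∘ T`.
-/

open Function

theorem Set.BijOn.bijective_piecewise_id {α : Type*} {f : α → α} {s : Set α}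
    [∀ x, Decidable (x ∈ s)] (h : BijOn f s s) : Bijective (s.piecewise f id) := by
  refine ⟨(injective_piecewise_iff s).2 ⟨h.injOn, injOn_id _, ?_⟩, ?_⟩
  · rintro x hx y hy rfl
    exact hy (h.mapsTo hx)
  · rw [← Set.range_eq_univ, range_piecewise, h.image_eq, image_id, union_compl_self]

def Measurable.toMeasurableEquiv {α β : Type*} [MeasurableSpace α] [StandardBorelSpace α]
    [MeasurableSpace β] [MeasurableSpace.CountablySeparated β] {f : α → β}
    (hf : Measurable f) (hbij : Bijective f) : α ≃ᵐ β where
  toEquiv := Equiv.ofBijective f hbij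
  measurable_toFun := hf
  measurable_invFun s hs := by
    rw [← Equiv.image_eq_preimage_symm]
    exact (hf.measurableEmbedding hbij.1).measurableSet_image.2 hs

theorem stdP_inter_Icc (A : Set ℝ) : stdP (A ∩ Icc 0 1) = stdP A := by
  rw [stdP, Measure.restrict_apply' measurableSet_Icc, Measure.restrict_apply' measurableSet_Icc,
    inter_assoc, inter_self]

theorem ae_mem_Icc_stdP : ∀ᵐ ω ∂stdP, ω ∈ Icc (0:ℝ) 1 :=
  ae_restrict_mem measurableSet_Icc

namespace IsMPT

variable {T : ℝ → ℝ}

theorem measurePreserving_piecewise_id [∀ x, Decidable (x ∈ Icc (0:ℝ) 1)] (hT : IsMPT T) :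
    MeasurePreserving ((Icc 0 1).piecewise T id) stdP stdP := by
  set f := (Icc (0:ℝ) 1).piecewise T id
  have hf : Measurable f := hT.1.piecewise measurableSet_Icc measurable_id
  refine ⟨hf, Measure.ext fun s hs => ?_⟩
  have hfT : EqOn f T (Icc 0 1) := piecewise_eqOn _ _ _
  calc stdP.map f s = stdP (f ⁻¹' s ∩ Icc 0 1) := by
        rw [Measure.map_apply hf hs, stdP_inter_Icc]
    _ = stdP (T '' (f ⁻¹' s ∩ Icc 0 1)) :=
        (hT.2.2 _ ((hf hs).inter measurableSet_Icc)).symm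
    _ = stdP (s ∩ Icc 0 1) := by
        rw [← (hfT.mono inter_subset_right).image_eq, image_preimage_inter, hfT.image_eq,
          hT.2.1.image_eq]
    _ = stdP s := stdP_inter_Icc s

theorem exists_measurePreserving_equiv (hT : IsMPT T) :
    ∃ e : ℝ ≃ᵐ ℝ, MeasurePreserving e stdP stdP ∧ ⇑e =ᵐ[stdP] T := by
  classical
  have hf := hT.measurePreserving_piecewise_id
  refine ⟨hf.measurable.toMeasurableEquiv hT.2.1.bijective_piecewise_id, hf, ?_⟩
  filter_upwards [ae_mem_Icc_stdP] with ω hω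
  exact piecewise_eqOn _ _ _ hω

end IsMPT

theorem pairing_congr_ae {ζ ζ' : ℝ → ℝ} (h : ζ =ᵐ[stdP] ζ') (Z : ℝ → ℝ) :
    pairing ζ Z = pairing ζ' Z :=
  integral_congr_ae (h.mul EventuallyEq.rfl)

theorem mem_dualSet_of_ae_eq {p q : ℝ≥0∞} {ρ : (ℝ → ℝ) → ℝ} {ζ ζ' : ℝ → ℝ}
    (hζ : ζ ∈ dualSet p q ρ) (h : ζ =ᵐ[stdP] ζ') : ζ' ∈ dualSet p q ρ :=
  ⟨hζ.1.ae_eq h, fun Z hZ => pairing_congr_ae h Z ▸ hζ.2 Z hZ⟩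

theorem Exposes.congr_ae {A : Set (ℝ → ℝ)} {Z ζ ζ' : ℝ → ℝ} (hE : Exposes A Z ζ)
    (h : ζ =ᵐ[stdP] ζ') (hζ' : ζ' ∈ A) : Exposes A Z ζ' := by
  refine ⟨hζ', fun ζ₁ hζ₁ => ?_, fun ζ₁ hζ₁ heq => ?_⟩
  · rw [← pairing_congr_ae h Z]
    exact hE.2.1 ζ₁ hζ₁
  · rw [← pairing_congr_ae h Z] at heq
    exact (hE.2.2 ζ₁ hζ₁ heq).trans h

theorem mem_expPoints_dualSet_of_ae_eq {p q : ℝ≥0∞} {ρ : (ℝ → ℝ) → ℝ} {ζ ζ' : ℝ → ℝ}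
    (hζ : ζ ∈ expPoints p (dualSet p q ρ)) (h : ζ =ᵐ[stdP] ζ') :
    ζ' ∈ expPoints p (dualSet p q ρ) := by
  obtain ⟨Z, hZ, hE⟩ := hζ
  exact ⟨Z, hZ, hE.congr_ae h (mem_dualSet_of_ae_eq hE.1 h)⟩

theorem mem_wstarClosure_of_ae_eq {p : ℝ≥0∞} {S : Set (ℝ → ℝ)} {ζ ζ' : ℝ → ℝ}
    (hζ : ζ ∈ wstarClosure p S) (h : ζ =ᵐ[stdP] ζ') : ζ' ∈ wstarClosure p S := by
  rw [wstarClosure, wstarTop, closure_induced] at hζ ⊢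
  convert hζ using 2
  exact (pairing_congr_ae h _).symm

theorem continuous_pairing_wstarTop {p : ℝ≥0∞} {Z : ℝ → ℝ} (hZ : MemLp Z p stdP) :
    Continuous[wstarTop p, _] (fun ζ : ℝ → ℝ => pairing ζ Z) := by
  let _ := wstarTop p
  exact (continuous_apply (⟨Z, hZ⟩ : {Z : ℝ → ℝ // MemLp Z p stdP})).comp
    (continuous_induced_dom (f := fun ζ (Z : {Z : ℝ → ℝ // MemLp Z p stdP}) => pairing ζ Z.1))

section MeasurePreservingEquiv

variable {p q : ℝ≥0∞} {ρ : (ℝ → ℝ) → ℝ} {e : ℝ ≃ᵐ ℝ}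

theorem pairing_comp_left (he : MeasurePreserving e stdP stdP) (ζ Z : ℝ → ℝ) :
    pairing (ζ ∘ e) Z = pairing ζ (Z ∘ e.symm) := by
  simp only [pairing, comp_apply]
  rw [← he.integral_comp' (fun τ => ζ τ * Z (e.symm τ))]
  simp only [MeasurableEquiv.symm_apply_apply]

theorem cdf_comp (he : MeasurePreserving e stdP stdP) (Z : ℝ → ℝ) : cdf (Z ∘ e) = cdf Z := by
  funext z
  exact congrArg ENNReal.toReal (he.measure_preimage_equiv {ω | Z ω ≤ z})

theorem comp_mem_dualSet (hρ : IsLawInvariant p ρ) (he : MeasurePreserving e stdP stdP)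
    {ζ : ℝ → ℝ} (hζ : ζ ∈ dualSet p q ρ) : ζ ∘ e ∈ dualSet p q ρ := by
  have he' := he.symm e
  refine ⟨hζ.1.comp_measurePreserving he, fun Z hZ => ?_⟩
  have hZe : MemLp (Z ∘ e.symm) p stdP := hZ.comp_measurePreserving he'
  calc pairing (ζ ∘ e) Z = pairing ζ (Z ∘ e.symm) := pairing_comp_left he ζ Z
    _ ≤ ρ (Z ∘ e.symm) := hζ.2 _ hZe
    _ = ρ Z := hρ _ _ hZe hZ (cdf_comp he' Z)

theorem Exposes.comp (hρ : IsLawInvariant p ρ) (he : MeasurePreserving e stdP stdP)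
    {Z ζ : ℝ → ℝ} (hE : Exposes (dualSet p q ρ) Z ζ) :
    Exposes (dualSet p q ρ) (Z ∘ e) (ζ ∘ e) := by
  have he' := he.symm e
  -- compare each competitor `ζ₁` for `Z ∘ e` with the competitor `ζ₁ ∘ e.symm` for `Z`
  have hpair (ζ₁ : ℝ → ℝ) : pairing ζ₁ (Z ∘ e) = pairing (ζ₁ ∘ e.symm) Z := by
    rw [pairing_comp_left he', MeasurableEquiv.symm_symm]
  have hζe : pairing (ζ ∘ e) (Z ∘ e) = pairing ζ Z := by
    rw [hpair, comp_assoc, MeasurableEquiv.self_comp_symm, comp_id]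
  refine ⟨comp_mem_dualSet hρ he hE.1, fun ζ₁ hζ₁ => ?_, fun ζ₁ hζ₁ heq => ?_⟩
  · rw [hpair, hζe]
    exact hE.2.1 _ (comp_mem_dualSet hρ he' hζ₁)
  · rw [hpair, hζe] at heq
    have h := he.quasiMeasurePreserving.ae_eq_comp (hE.2.2 _ (comp_mem_dualSet hρ he' hζ₁) heq)
    rwa [comp_assoc, MeasurableEquiv.symm_comp_self, comp_id] at h

theorem comp_mem_expPoints (hρ : IsLawInvariant p ρ) (he : MeasurePreserving e stdP stdP)
    {ζ : ℝ → ℝ} (hζ : ζ ∈ expPoints p (dualSet p q ρ)) : ζ ∘ e ∈ expPoints p (dualSet p q ρ) := by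
  obtain ⟨Z, hZ, hE⟩ := hζ
  exact ⟨Z ∘ e, hZ.comp_measurePreserving he, hE.comp hρ he⟩

theorem continuous_comp_wstarTop (he : MeasurePreserving e stdP stdP) :
    Continuous[wstarTop p, wstarTop p] (fun ζ : ℝ → ℝ => ζ ∘ e) := by
  let _ := wstarTop p
  refine continuous_induced_rng.2 (continuous_pi fun Z => ?_)
  simp only [comp_apply, pairing_comp_left he]
  exact continuous_pairing_wstarTop (Z.2.comp_measurePreserving (he.symm e))

end MeasurePreservingEquiv

theorem expPoints_invariant_under_measure_preserving_general
    (p q : ℝ≥0∞)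
    (ρ : (ℝ → ℝ) → ℝ) (hρl : IsLawInvariant p ρ)
    (T : ℝ → ℝ) (hT : IsMPT T) :
    (∀ ζ ∈ expPoints p (dualSet p q ρ), (ζ ∘ T) ∈ expPoints p (dualSet p q ρ)) ∧
    (∀ ζ ∈ wstarClosure p (expPoints p (dualSet p q ρ)),
      (ζ ∘ T) ∈ wstarClosure p (expPoints p (dualSet p q ρ))) := by
  obtain ⟨e, he, heT⟩ := hT.exists_measurePreserving_equiv
  have hcomp (ζ : ℝ → ℝ) : ζ ∘ e =ᵐ[stdP] ζ ∘ T := heT.fun_comp ζ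
  have hexp : MapsTo (· ∘ e) (expPoints p (dualSet p q ρ)) (expPoints p (dualSet p q ρ)) :=
    fun ζ hζ => comp_mem_expPoints hρl he hζ
  refine ⟨fun ζ hζ => mem_expPoints_dualSet_of_ae_eq (hexp hζ) (hcomp ζ),
    fun ζ hζ => mem_wstarClosure_of_ae_eq ?_ (hcomp ζ)⟩
  let _ := wstarTop p
  exact hexp.closure (continuous_comp_wstarTop he) hζ

/-- `Exp(𝔄)` and its weak* closure are invariant under the group of
measure-preserving transformations of `[0,1]`. -/
theorem expPoints_invariant_under_measure_preserving
    (p q : ℝ≥0∞) (hp : 1 ≤ p) (hp' : p ≠ ∞) (hpq : 1 / p + 1 / q = 1)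
    (ρ : (ℝ → ℝ) → ℝ) (hρc : IsCoherent p ρ) (hρl : IsLawInvariant p ρ)
    (T : ℝ → ℝ) (hT : IsMPT T) :
    (∀ ζ ∈ expPoints p (dualSet p q ρ), (ζ ∘ T) ∈ expPoints p (dualSet p q ρ)) ∧
    (∀ ζ ∈ wstarClosure p (expPoints p (dualSet p q ρ)),
      (ζ ∘ T) ∈ wstarClosure p (expPoints p (dualSet p q ρ))) :=
  expPoints_invariant_under_measure_preserving_general p q ρ hρl T hT

end
end
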